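/- arXiv:2511.22469 — 8 statements merged into one kernel-verified Lean document; each statement's English description precedes it below -/
import Mathlib

section
/- There is no sequence (Γ_n)_{n∈ℕ} of maps from the class Ω_h of bounded self-adjoint operators on ℓ²(ℕ) into the space of nonempty compact subsets of ℂ such that both: (i) each Γ_n has the finite-determination property, i.e. for every A ∈ Ω_h there exists a finite set S ⊆ ℕ×ℕ such that every B ∈ Ω_h whose matrix entries satisfy ⟨B e_j, e_i⟩ = ⟨A e_j, e_i⟩ for all (i,j) ∈ S necessarily satisfies Γ_n(B) = Γ_n(A); and (ii) for every H ∈ Ω_h, the sets Γ_n(H) converge to the spectrum Sp(H) in the Hausdorff metric as n → ∞. -/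
open scoped InnerProductSpace

/-- The canonical basis vector `e n` of `ℓ²(ℕ)`. -/
noncomputable def eVec (n : ℕ) : lp (fun _ : ℕ => ℂ) 2 := lp.single 2 n 1

/-- The matrix entry `⟨A e_j, e_i⟩` of a bounded operator on `ℓ²(ℕ)`. -/
noncomputable def matEntry
    (A : lp (fun _ : ℕ => ℂ) 2 →L[ℂ] lp (fun _ : ℕ => ℂ) 2) (i j : ℕ) : ℂ :=
  ⟪A (eVec j), eVec i⟫_ℂ

/-!
Suppose such `Γ n` exist. A diagonal argument builds the permutation operator `X = U_σ` of an
involution `σ` of `ℕ`. At each stage `σ` is known on `[0, m)` and preserves it. The truncation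
`P_m U_σ` kills `e m`, so `0 ∈ Sp (P_m U_σ)`; letting `σ` swap `[m, m + d)` with `[m + d, m + 2d)`
pushes the rows `[m, m + d)` of `X` out of the corner `[0, m + d)²`, on which `X` therefore agrees
with `P_m U_σ`. The permutation operator of the extended involution squares to `1`, so its
spectrum lies in `{1, -1}`, and `X` agrees with it on any prescribed corner, since later stages
only act beyond it. With corners containing finite determination sets of `Γ n` for suitable large
`n`, `Sp X` is within `1/4` in Hausdorff distance of both a set containing `0` and a subset of
`{1, -1}`, two sets at distance at least `1`.
-/

noncomputable section

open Filter Metric TopologicalSpace Topology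
open scoped ENNReal

local notation "ℓ²" => lp (fun _ : ℕ => ℂ) 2

local notation "Ωₕ" => {H : ℓ² →L[ℂ] ℓ² // IsSelfAdjoint H}

theorem eVec_apply (n j : ℕ) : eVec n j = if j = n then 1 else 0 := by
  simp [eVec, lp.single_apply, Pi.single_apply]

theorem eVec_ne_zero (n : ℕ) : eVec n ≠ 0 := fun h => by
  simpa [eVec_apply] using congr($h n)

instance : Nontrivial ℓ² := ⟨⟨eVec 0, 0, eVec_ne_zero 0⟩⟩

theorem zero_mem_spectrum_of_apply_eq_zero {𝕜 E : Type*} [NormedField 𝕜] [NormedAddCommGroup E]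
    [NormedSpace 𝕜 E] {T : E →L[𝕜] E} {v : E} (hv : v ≠ 0) (h : T v = 0) :
    (0 : 𝕜) ∈ spectrum 𝕜 T := by
  rw [spectrum.zero_mem_iff]
  intro hT
  have hinj : Function.Injective T :=
    ((Module.End.isUnit_iff _).1 (hT.map ContinuousLinearMap.toLinearMapRingHom)).injective
  exact hv (hinj (by simpa using h))

theorem spectrum_subset_of_mul_self_eq_one {𝕜 A : Type*} [Field 𝕜] [Ring A] [Algebra 𝕜 A]
    [Nontrivial A] {a : A} (h : a * a = 1) : spectrum 𝕜 a ⊆ {1, -1} := by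
  intro z hz
  have : z ^ 2 ∈ spectrum 𝕜 (a ^ 2) := spectrum.pow_image_subset a 2 ⟨z, hz, rfl⟩
  rwa [sq a, h, spectrum.one_eq, Set.mem_singleton_iff, sq_eq_one_iff] at this

def spectrumCompacts {A : Type*} [NormedRing A] [NormedAlgebra ℂ A] [CompleteSpace A]
    [Nontrivial A] (a : A) : NonemptyCompacts ℂ :=
  ⟨⟨spectrum ℂ a, spectrum.isCompact a⟩, spectrum.nonempty a⟩

theorem one_le_dist_of_zero_mem {K L : NonemptyCompacts ℂ} (hK : (0 : ℂ) ∈ K)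
    (hL : (L : Set ℂ) ⊆ {1, -1}) : 1 ≤ dist K L := by
  rw [NonemptyCompacts.dist_eq]
  refine le_trans ?_ (infDist_le_hausdorffDist_of_mem hK (edist_ne_top K L))
  rw [le_infDist L.nonempty]
  intro y hy
  rcases hL hy with rfl | rfl <;> simp

section IndicatorComp

variable {σ : ℕ → ℕ} (s : Set ℕ)

theorem sum_norm_indicator_comp_le (hσ : σ.Injective) (u : ℓ²) (F : Finset ℕ) :
    ∑ j ∈ F, ‖s.indicator (fun j => u (σ j)) j‖ ^ (2 : ℝ≥0∞).toReal ≤ ‖u‖ ^ (2 : ℝ≥0∞).toReal :=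
  calc ∑ j ∈ F, ‖s.indicator (fun j => u (σ j)) j‖ ^ (2 : ℝ≥0∞).toReal
      ≤ ∑ j ∈ F, ‖u (σ j)‖ ^ (2 : ℝ≥0∞).toReal := by
        gcongr with j
        exact norm_indicator_le_norm_self _ _
    _ = ∑ i ∈ F.map ⟨σ, hσ⟩, ‖u i‖ ^ (2 : ℝ≥0∞).toReal := by rw [Finset.sum_map]; rfl
    _ ≤ ‖u‖ ^ (2 : ℝ≥0∞).toReal := lp.sum_rpow_le_norm_rpow (by norm_num) u _

def indicatorComp (hσ : σ.Injective) : ℓ² →L[ℂ] ℓ² :=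
  LinearMap.mkContinuous
    { toFun := fun u =>
        ⟨s.indicator (fun j => u (σ j)), memℓp_gen' (sum_norm_indicator_comp_le s hσ u)⟩
      map_add' := fun u v => lp.ext (Set.indicator_add s _ _)
      map_smul' := fun c u => lp.ext (Set.indicator_const_smul s c _) }
    1 fun u => by
      rw [one_mul]
      exact lp.norm_le_of_forall_sum_le (by norm_num) (norm_nonneg u)
        (sum_norm_indicator_comp_le s hσ u)

theorem indicatorComp_apply (hσ : σ.Injective) (u : ℓ²) (j : ℕ) :
    indicatorComp s hσ u j = s.indicator (fun j => u (σ j)) j := rfl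

open scoped Classical in
theorem matEntry_indicatorComp (hσ : σ.Injective) (i j : ℕ) :
    matEntry (indicatorComp s hσ) i j = if i ∈ s ∧ σ i = j then 1 else 0 := by
  rw [matEntry, lp.inner_eq_tsum, tsum_eq_single i]
  · by_cases hi : i ∈ s <;> simp [indicatorComp_apply, hi, eVec_apply, eq_comm]
  · intro k hk
    simp [eVec_apply, hk]

theorem isSelfAdjoint_indicatorComp (hσ : σ.Involutive) (hs : ∀ i, σ i ∈ s ↔ i ∈ s) :
    IsSelfAdjoint (indicatorComp s hσ.injective) := by
  rw [ContinuousLinearMap.isSelfAdjoint_iff_isSymmetric]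
  intro u v
  simp only [ContinuousLinearMap.coe_coe, lp.inner_eq_tsum]
  rw [← (hσ.toPerm σ).tsum_eq]
  congr 1
  funext j
  by_cases hj : j ∈ s <;> simp [indicatorComp_apply, hs, hσ j, hj]

theorem indicatorComp_univ_mul_self (hσ : σ.Involutive) :
    indicatorComp Set.univ hσ.injective * indicatorComp Set.univ hσ.injective = 1 := by
  ext u j
  simp [indicatorComp_apply, hσ j]

theorem indicatorComp_eVec_eq_zero (hσ : σ.Involutive) {m : ℕ} (hm : σ m ∉ s) :
    indicatorComp s hσ.injective (eVec m) = 0 := by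
  ext j
  by_cases hj : j ∈ s
  · have : σ j ≠ m := fun h => hm (by rwa [← h, hσ j])
    simp [indicatorComp_apply, hj, eVec_apply, this]
  · simp [indicatorComp_apply, hj]

end IndicatorComp

def permOp {σ : ℕ → ℕ} (hσ : σ.Involutive) : Ωₕ :=
  ⟨indicatorComp Set.univ hσ.injective, isSelfAdjoint_indicatorComp _ hσ (by simp)⟩

theorem spectrum_permOp_subset {σ : ℕ → ℕ} (hσ : σ.Involutive) :
    spectrum ℂ (permOp hσ).1 ⊆ {1, -1} :=
  spectrum_subset_of_mul_self_eq_one (indicatorComp_univ_mul_self hσ)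

def EntriesAgreeBelow (N : ℕ) (T T' : ℓ² →L[ℂ] ℓ²) : Prop :=
  ∀ i < N, ∀ j < N, matEntry T i j = matEntry T' i j

theorem EntriesAgreeBelow.mono {N N' : ℕ} {T T' : ℓ² →L[ℂ] ℓ²} (h : EntriesAgreeBelow N T T')
    (hN : N' ≤ N) : EntriesAgreeBelow N' T T' :=
  fun i hi j hj => h i (hi.trans_le hN) j (hj.trans_le hN)

theorem exists_entriesAgreeBelow_imp_eq {α : Type*} {F : Ωₕ → α} {H : Ωₕ}
    (h : ∃ S : Finset (ℕ × ℕ), ∀ B : Ωₕ,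
      (∀ p ∈ S, matEntry B.1 p.1 p.2 = matEntry H.1 p.1 p.2) → F B = F H) :
    ∃ N, ∀ B : Ωₕ, EntriesAgreeBelow N B.1 H.1 → F B = F H := by
  obtain ⟨S, hS⟩ := h
  refine ⟨S.sup (fun p => max p.1 p.2) + 1, fun B hB => hS B fun p hp => hB _ ?_ _ ?_⟩ <;>
  · have := Finset.le_sup (f := fun p : ℕ × ℕ => max p.1 p.2) hp
    omega

structure BoundedInvolution where
  f : ℕ → ℕ
  m : ℕ
  involutive : f.Involutive
  eq_self_of_le : ∀ i, m ≤ i → f i = i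

namespace BoundedInvolution

theorem f_lt_iff (s : BoundedInvolution) {i : ℕ} : s.f i < s.m ↔ i < s.m := by
  have maps_to {j : ℕ} (hj : j < s.m) : s.f j < s.m := by
    by_contra! h
    have := s.involutive j
    rw [s.eq_self_of_le _ h] at this
    omega
  exact ⟨fun h => s.involutive i ▸ maps_to h, maps_to⟩

instance : Preorder BoundedInvolution where
  le s t := s.m ≤ t.m ∧ ∀ i < s.m, t.f i = s.f i
  le_refl _ := ⟨le_rfl, fun _ _ => rfl⟩
  le_trans _ _ _ hst htu :=
    ⟨hst.1.trans htu.1, fun i hi => (htu.2 i (hi.trans_le hst.1)).trans (hst.2 i hi)⟩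

instance : Bot BoundedInvolution := ⟨⟨id, 0, fun _ => rfl, fun _ _ => rfl⟩⟩

def extendFun (s : BoundedInvolution) (d : ℕ) (i : ℕ) : ℕ :=
  if i < s.m then s.f i
  else if i < s.m + d then i + d
  else if i < s.m + 2 * d then i - d
  else i

theorem extendFun_involutive (s : BoundedInvolution) (d : ℕ) : (s.extendFun d).Involutive := by
  intro i
  unfold extendFun
  by_cases h1 : i < s.m
  · simp [h1, s.f_lt_iff.2 h1, s.involutive i]
  by_cases h2 : i < s.m + d
  · simp only [h1, h2, if_false, if_true]; split_ifs <;> omega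
  by_cases h3 : i < s.m + 2 * d
  · simp only [h1, h2, h3, if_false, if_true]; split_ifs <;> omega
  · simp [h1, h2, h3]

def extend (s : BoundedInvolution) (d M : ℕ) (hM : s.m + 2 * d ≤ M) : BoundedInvolution :=
  ⟨s.extendFun d, M, s.extendFun_involutive d, fun i hi => by
    unfold extendFun; split_ifs <;> omega⟩

theorem le_extend (s : BoundedInvolution) {d M : ℕ} (hM : s.m + 2 * d ≤ M) :
    s ≤ s.extend d M hM :=
  ⟨show s.m ≤ M by omega, fun _ hi => if_pos hi⟩

section Limit

variable {seq : ℕ → BoundedInvolution}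

def limitFun (seq : ℕ → BoundedInvolution) (i : ℕ) : ℕ := (seq (i + 1)).f i

theorem limitFun_eq (hmono : Monotone seq) (hm : ∀ k, k ≤ (seq k).m) {k i : ℕ}
    (hi : i < (seq k).m) : limitFun seq i = (seq k).f i := by
  rcases le_total k (i + 1) with h | h
  · exact (hmono h).2 i hi
  · exact ((hmono h).2 i (Nat.lt_of_succ_le (hm (i + 1)))).symm

theorem limitFun_involutive (hmono : Monotone seq) (hm : ∀ k, k ≤ (seq k).m) :
    (limitFun seq).Involutive := fun i => by
  have hi : i < (seq (i + 1)).m := Nat.lt_of_succ_le (hm (i + 1))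
  show limitFun seq ((seq (i + 1)).f i) = i
  rw [limitFun_eq hmono hm ((seq (i + 1)).f_lt_iff.2 hi), (seq (i + 1)).involutive]

end Limit

def truncPermOp (s : BoundedInvolution) : Ωₕ :=
  ⟨indicatorComp (Set.Iio s.m) s.involutive.injective,
    isSelfAdjoint_indicatorComp _ s.involutive fun _ => s.f_lt_iff⟩

theorem zero_mem_spectrum_truncPermOp (s : BoundedInvolution) :
    (0 : ℂ) ∈ spectrum ℂ s.truncPermOp.1 :=
  zero_mem_spectrum_of_apply_eq_zero (eVec_ne_zero s.m) <|
    indicatorComp_eVec_eq_zero _ s.involutive (by simp [s.eq_self_of_le s.m le_rfl])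

section Construction

/- `R H m` is to be read as the size of a top-left corner of matrix entries that determines
`Γ n H` for some `n ≥ m`. -/
variable (R : Ωₕ → ℕ → ℕ)

def nextPermOp (s : BoundedInvolution) : Ωₕ :=
  permOp (s.extendFun_involutive (R s.truncPermOp s.m))

-- The new bound leaves the corner determining `Γ` at `s.nextPermOp R` untouched and exceeds `s.m`.
def step (s : BoundedInvolution) : BoundedInvolution :=
  s.extend (R s.truncPermOp s.m)
    (s.m + 2 * R s.truncPermOp s.m + R (s.nextPermOp R) s.m + 1) (by omega)

def stage : ℕ → BoundedInvolution
  | 0 => ⊥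
  | k + 1 => (stage k).step R

theorem monotone_stage : Monotone (stage R) :=
  monotone_nat_of_le_succ fun _ => le_extend _ (by omega)

theorem le_stage_m (k : ℕ) : k ≤ (stage R k).m := by
  induction k with
  | zero => exact le_rfl
  | succ k ih => exact Nat.succ_le_of_lt (ih.trans_lt (by simp [stage, step, extend]; omega))

def limitOp : Ωₕ :=
  permOp (limitFun_involutive (monotone_stage R) (le_stage_m R))

theorem limitFun_stage_eq_extendFun {k i : ℕ} (hi : i < (stage R (k + 1)).m) :
    limitFun (stage R) i = (stage R k).extendFun (R (stage R k).truncPermOp (stage R k).m) i :=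
  limitFun_eq (monotone_stage R) (le_stage_m R) hi

theorem entriesAgreeBelow_truncPermOp (k : ℕ) :
    EntriesAgreeBelow ((stage R k).m + R (stage R k).truncPermOp (stage R k).m)
      (limitOp R).1 (stage R k).truncPermOp.1 := by
  intro i hi j hj
  simp only [limitOp, permOp, truncPermOp, matEntry_indicatorComp, Set.mem_univ, true_and,
    Set.mem_Iio]
  rw [limitFun_stage_eq_extendFun R (k := k) (by simp [stage, step, extend]; omega), extendFun]
  by_cases h : i < (stage R k).m
  · simp [h]
  · have : i + R (stage R k).truncPermOp (stage R k).m ≠ j := by omega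
    simp [h, hi, this]

theorem entriesAgreeBelow_nextPermOp (k : ℕ) :
    EntriesAgreeBelow (R ((stage R k).nextPermOp R) (stage R k).m)
      (limitOp R).1 ((stage R k).nextPermOp R).1 := by
  intro i hi j _
  simp only [limitOp, nextPermOp, permOp, matEntry_indicatorComp]
  rw [limitFun_stage_eq_extendFun R (k := k) (by simp [stage, step, extend]; omega)]

end Construction

end BoundedInvolution

open BoundedInvolution

/-- There is no sequence of finitely-determined maps from the bounded self-adjoint
operators on `ℓ²(ℕ)` to the nonempty compact subsets of `ℂ` converging, in Hausdorff
distance, to the spectrum on every input. -/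
theorem stmt0 :
    ¬ ∃ Γ : ℕ → {H : lp (fun _ : ℕ => ℂ) 2 →L[ℂ] lp (fun _ : ℕ => ℂ) 2 // IsSelfAdjoint H} →
        TopologicalSpace.NonemptyCompacts ℂ,
      (∀ (n : ℕ) (A : {H : lp (fun _ : ℕ => ℂ) 2 →L[ℂ] lp (fun _ : ℕ => ℂ) 2 // IsSelfAdjoint H}),
        ∃ S : Finset (ℕ × ℕ),
          ∀ B : {H : lp (fun _ : ℕ => ℂ) 2 →L[ℂ] lp (fun _ : ℕ => ℂ) 2 // IsSelfAdjoint H},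
            (∀ p ∈ S, matEntry B.1 p.1 p.2 = matEntry A.1 p.1 p.2) → Γ n B = Γ n A) ∧
      (∀ H : {H : lp (fun _ : ℕ => ℂ) 2 →L[ℂ] lp (fun _ : ℕ => ℂ) 2 // IsSelfAdjoint H},
        Filter.Tendsto (fun n => Metric.hausdorffDist (Γ n H : Set ℂ) (spectrum ℂ H.1))
          Filter.atTop (nhds 0)) := by
  rintro ⟨Γ, hdet, hconv⟩
  have hlim (H : Ωₕ) : Tendsto (Γ · H) atTop (𝓝 (spectrumCompacts H.1)) :=
    tendsto_iff_dist_tendsto_zero.2 (hconv H)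
  choose rad hrad using fun n H => exists_entriesAgreeBelow_imp_eq (hdet n H)
  have hidx (H : Ωₕ) (m : ℕ) : ∃ n, m ≤ n ∧ dist (Γ n H) (spectrumCompacts H.1) < 1 / 8 :=
    ((eventually_ge_atTop m).and ((hlim H).eventually (ball_mem_nhds _ (by norm_num)))).exists
  choose idx hidx_ge hidx_dist using hidx
  let R (H : Ωₕ) (m : ℕ) : ℕ := rad (idx H m) H
  obtain ⟨k, hk⟩ := eventually_atTop.1
    ((hlim (limitOp R)).eventually (ball_mem_nhds _ (by norm_num : (0 : ℝ) < 1 / 8)))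
  set s := stage R k
  have hclose (H : Ωₕ) (hH : Γ (idx H s.m) (limitOp R) = Γ (idx H s.m) H) :
      dist (spectrumCompacts (limitOp R).1) (spectrumCompacts H.1) < 1 / 4 := by
    have h1 := hk _ ((le_stage_m R k).trans (hidx_ge H s.m))
    rw [hH, dist_comm] at h1
    linarith [hidx_dist H s.m, dist_triangle (spectrumCompacts (limitOp R).1)
      (Γ (idx H s.m) H) (spectrumCompacts H.1)]
  have hB := hclose s.truncPermOp
    (hrad _ _ _ ((entriesAgreeBelow_truncPermOp R k).mono (Nat.le_add_left _ _)))
  have hA := hclose (s.nextPermOp R) (hrad _ _ _ (entriesAgreeBelow_nextPermOp R k))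
  have hfar : 1 ≤ dist (spectrumCompacts s.truncPermOp.1) (spectrumCompacts (s.nextPermOp R).1) :=
    one_le_dist_of_zero_mem (zero_mem_spectrum_truncPermOp s)
      (spectrum_permOp_subset (s.extendFun_involutive _))
  linarith [dist_triangle_left (spectrumCompacts s.truncPermOp.1)
    (spectrumCompacts (s.nextPermOp R).1) (spectrumCompacts (limitOp R).1)]
end
end

section
/- Let k ≥ 1 and let z ∈ ℂ with 0 < |z| < 1. Then the operator norm of (J_k − zI)^{-1}, as a linear map on ℂ^k with the Euclidean norm, satisfies ‖(J_k − zI)^{-1}‖ ≥ |z|^{−k}. -/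
/-- The `k × k` nilpotent Jordan block over `ℂ`: ones on the superdiagonal,
zeros elsewhere. -/
noncomputable def JordanBlock (k : ℕ) : Matrix (Fin k) (Fin k) ℂ :=
  Matrix.of fun i j => if (j : ℕ) = (i : ℕ) + 1 then 1 else 0

/-!
Since `J_k` is nilpotent, `(J_k - z)⁻¹ = -z⁻¹ ∑_{m<k} (z⁻¹ J_k)^m` is a finite geometric series,
and its top-right entry is `-z⁻ᵏ`. The operator norm dominates the modulus of every matrix
entry, since `A i j` is the `i`-th coordinate of the image of the `j`-th unit vector.
-/

theorem Matrix.norm_apply_le_norm_toEuclideanCLM {𝕜 n : Type*} [RCLike 𝕜] [Fintype n]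
    [DecidableEq n] (A : Matrix n n 𝕜) (i j : n) :
    ‖A i j‖ ≤ ‖Matrix.toEuclideanCLM (𝕜 := 𝕜) (n := n) A‖ := by
  calc ‖A i j‖ = ‖toEuclideanCLM (𝕜 := 𝕜) (n := n) A (EuclideanSpace.single j 1) i‖ := by
        simp [EuclideanSpace.single, Matrix.mulVec_single]
    _ ≤ ‖toEuclideanCLM (𝕜 := 𝕜) (n := n) A (EuclideanSpace.single j 1)‖ := PiLp.norm_apply_le _ _
    _ ≤ ‖toEuclideanCLM (𝕜 := 𝕜) (n := n) A‖ := by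
        simpa using (toEuclideanCLM (𝕜 := 𝕜) (n := n) A).le_opNorm (EuclideanSpace.single j 1)

theorem Matrix.inv_sub_smul_one_of_pow_eq_zero {n K : Type*} [Fintype n] [DecidableEq n]
    [Field K] {N : Matrix n n K} {k : ℕ} (hN : N ^ k = 0) {z : K} (hz : z ≠ 0) :
    (N - z • 1)⁻¹ = -z⁻¹ • ∑ m ∈ Finset.range k, (z⁻¹ • N) ^ m := by
  refine Matrix.inv_eq_right_inv ?_
  have hfactor : N - z • 1 = -z • (1 - z⁻¹ • N) := by
    rw [smul_sub, smul_smul, neg_mul, mul_inv_cancel₀ hz]; module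
  rw [hfactor, smul_mul_smul_comm, neg_mul_neg, mul_inv_cancel₀ hz, one_smul, mul_neg_geom_sum,
    smul_pow, hN, smul_zero, sub_zero]

theorem JordanBlock_pow_apply (k m : ℕ) (i j : Fin k) :
    (JordanBlock k ^ m) i j = if (j : ℕ) = i + m then 1 else 0 := by
  induction m generalizing i with
  | zero => simp [Matrix.one_apply, Fin.ext_iff, eq_comm]
  | succ m ih =>
    simp only [pow_succ', Matrix.mul_apply, ih]
    simp only [JordanBlock, Matrix.of_apply, boole_mul]
    by_cases hi : (i : ℕ) + 1 < k
    · rw [Fintype.sum_eq_single ⟨i + 1, hi⟩ fun l hl => if_neg fun h => hl (Fin.ext h),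
        if_pos rfl]
      simp only [add_assoc, add_comm 1 m]
    · rw [Finset.sum_eq_zero fun l _ => if_neg (by omega), if_neg (by omega)]

theorem JordanBlock_pow_self (k : ℕ) : JordanBlock k ^ k = 0 := by
  ext i j
  rw [JordanBlock_pow_apply, Matrix.zero_apply, if_neg (by omega)]

theorem JordanBlock_sub_smul_one_inv_apply (k : ℕ) {z : ℂ} (hz : z ≠ 0) (i j : Fin k) :
    (JordanBlock k - z • 1)⁻¹ i j = if i ≤ j then -z⁻¹ ^ ((j : ℕ) - i + 1) else 0 := by
  rw [Matrix.inv_sub_smul_one_of_pow_eq_zero (JordanBlock_pow_self k) hz]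
  simp only [Matrix.smul_apply, Matrix.sum_apply, smul_pow, JordanBlock_pow_apply, smul_eq_mul,
    mul_ite, mul_one, mul_zero]
  split_ifs with hij
  · have hsum : (∑ m ∈ Finset.range k, if (j : ℕ) = i + m then z⁻¹ ^ m else 0) =
        z⁻¹ ^ ((j : ℕ) - i) := by
      have hcond (m : ℕ) : (j : ℕ) = i + m ↔ (j : ℕ) - i = m := by omega
      rw [Finset.sum_congr rfl fun m _ => if_congr (hcond m) rfl rfl, Finset.sum_ite_eq,
        if_pos (Finset.mem_range.2 (by omega))]
    rw [hsum]; ring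
  · rw [Finset.sum_eq_zero fun m _ => if_neg (by omega), mul_zero]

theorem stmt3_general (k : ℕ) (hk : 1 ≤ k) (z : ℂ) (h0 : 0 < ‖z‖) :
    ‖z‖ ^ (-(k : ℤ)) ≤
      ‖Matrix.toEuclideanCLM (𝕜 := ℂ) (n := Fin k) ((JordanBlock k - z • 1)⁻¹)‖ := by
  have hz : z ≠ 0 := norm_pos_iff.1 h0
  have hcorner := JordanBlock_sub_smul_one_inv_apply k hz ⟨0, hk⟩ ⟨k - 1, by omega⟩
  rw [if_pos (Fin.mk_le_mk.2 (Nat.zero_le _)), show k - 1 - 0 + 1 = k by omega] at hcorner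
  calc ‖z‖ ^ (-(k : ℤ)) = ‖(JordanBlock k - z • 1)⁻¹ ⟨0, hk⟩ ⟨k - 1, by omega⟩‖ := by
        rw [hcorner, norm_neg, norm_pow, norm_inv, inv_pow, zpow_neg, zpow_natCast]
    _ ≤ _ := Matrix.norm_apply_le_norm_toEuclideanCLM _ _ _

/-- For `k ≥ 1` and `0 < |z| < 1`, the operator norm (w.r.t. the Euclidean norm on `ℂ^k`)
of `(J_k - z I)⁻¹` is at least `|z|^{-k}`. -/
theorem stmt3 (k : ℕ) (hk : 1 ≤ k) (z : ℂ) (h0 : 0 < ‖z‖) (h1 : ‖z‖ < 1) :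
    ‖z‖ ^ (-(k : ℤ)) ≤
      ‖Matrix.toEuclideanCLM (𝕜 := ℂ) (n := Fin k) ((JordanBlock k - z • 1)⁻¹)‖ :=
  stmt3_general k hk z h0
end

section
/- Let z ∈ ℂ with 0 < |z| ≤ 1. Then ‖(J_k − zI)^{-1}‖ → ∞ as k → ∞, where the norm is the operator norm on ℂ^k with the Euclidean norm. -/
open Matrix

theorem JordanBlock_mulVec {k : ℕ} (x : Fin k → ℂ) (i : Fin k) :
    (JordanBlock k *ᵥ x) i = if h : (i : ℕ) + 1 < k then x ⟨i + 1, h⟩ else 0 := by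
  simp only [mulVec, dotProduct, JordanBlock, of_apply, ite_mul, one_mul, zero_mul]
  split_ifs with h
  · rw [Finset.sum_eq_single ⟨i + 1, h⟩ (fun j _ hj => if_neg fun hj' => hj (Fin.ext hj'))
      (by simp)]
    simp
  · exact Finset.sum_eq_zero fun j _ => if_neg (by omega)

theorem isUpperTriangular_JordanBlock_sub_smul_one (k : ℕ) (z : ℂ) :
    (JordanBlock k - z • 1).IsUpperTriangular := by
  intro i j (hji : j < i)
  have hij : i ≠ j := hji.ne'
  rw [Fin.lt_def] at hji
  simp only [JordanBlock, Matrix.sub_apply, of_apply, Matrix.smul_apply, one_apply_ne hij,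
    smul_zero, sub_zero]
  exact if_neg (by omega)

theorem det_JordanBlock_sub_smul_one (k : ℕ) (z : ℂ) :
    (JordanBlock k - z • 1).det = (-z) ^ k := by
  rw [det_of_isUpperTriangular (isUpperTriangular_JordanBlock_sub_smul_one k z)]
  simp [JordanBlock]

theorem JordanBlock_sub_smul_one_mulVec_geometric (n : ℕ) (z : ℂ) :
    (JordanBlock (n + 1) - z • 1) *ᵥ (fun i : Fin (n + 1) => z ^ (i : ℕ)) =
      Pi.single (Fin.last n) (-z ^ (n + 1) : ℂ) := by
  ext i
  rw [sub_mulVec, Pi.sub_apply, JordanBlock_mulVec, smul_mulVec, one_mulVec]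
  by_cases hi : i = Fin.last n
  · subst hi
    simp [pow_succ']
  · have : (i : ℕ) + 1 < n + 1 := by have := Fin.val_lt_last hi; omega
    simp [this, hi, pow_succ']

theorem norm_le_opNorm_toEuclideanCLM_inv_mul {𝕜 ι : Type*} [RCLike 𝕜] [Fintype ι]
    [DecidableEq ι]
    {M : Matrix ι ι 𝕜} (hM : IsUnit M.det) (x : EuclideanSpace 𝕜 ι) :
    ‖x‖ ≤ ‖toEuclideanCLM (𝕜 := 𝕜) M⁻¹‖ * ‖toEuclideanCLM (𝕜 := 𝕜) M x‖ := by
  calc ‖x‖ = ‖toEuclideanCLM (𝕜 := 𝕜) (M⁻¹ * M) x‖ := by rw [nonsing_inv_mul M hM, map_one]; rfl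
    _ = ‖toEuclideanCLM (𝕜 := 𝕜) M⁻¹ (toEuclideanCLM (𝕜 := 𝕜) M x)‖ := by rw [map_mul]; rfl
    _ ≤ _ := ContinuousLinearMap.le_opNorm _ _

theorem sqrt_le_opNorm_inv_JordanBlock_sub_smul_one (n : ℕ) {z : ℂ} (hz0 : z ≠ 0)
    (hz1 : ‖z‖ ≤ 1) :
    √(n + 1 : ℝ) ≤
      ‖toEuclideanCLM (𝕜 := ℂ) (n := Fin (n + 1)) (JordanBlock (n + 1) - z • 1)⁻¹‖ := by
  set A := toEuclideanCLM (𝕜 := ℂ) (n := Fin (n + 1)) (JordanBlock (n + 1) - z • 1)⁻¹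
  set x : EuclideanSpace ℂ (Fin (n + 1)) := WithLp.toLp 2 fun i => z ^ (i : ℕ)
  have hdet : IsUnit (JordanBlock (n + 1) - z • 1).det := by
    rw [det_JordanBlock_sub_smul_one]
    exact (neg_ne_zero.mpr hz0).isUnit.pow _
  have hx : ‖x‖ ≤ ‖A‖ * ‖z‖ ^ (n + 1) := by
    have := norm_le_opNorm_toEuclideanCLM_inv_mul hdet x
    rwa [toEuclideanCLM_toLp, JordanBlock_sub_smul_one_mulVec_geometric, PiLp.toLp_single,
      PiLp.norm_single, norm_neg, norm_pow] at this
  have hx_sq : (n + 1 : ℝ) * (‖z‖ ^ (n + 1)) ^ 2 ≤ ‖x‖ ^ 2 := by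
    rw [EuclideanSpace.norm_sq_eq]
    calc (n + 1 : ℝ) * (‖z‖ ^ (n + 1)) ^ 2 = ∑ i : Fin (n + 1), (‖z‖ ^ (n + 1)) ^ 2 := by simp
      _ ≤ ∑ i : Fin (n + 1), ‖z ^ (i : ℕ)‖ ^ 2 := by
        gcongr with i
        rw [norm_pow]
        exact pow_le_pow_of_le_one (norm_nonneg z) hz1 (by omega)
  have hzpow : 0 < ‖z‖ ^ (n + 1) := pow_pos (norm_pos_iff.mpr hz0) _
  rw [Real.sqrt_le_iff]
  refine ⟨norm_nonneg _, le_of_mul_le_mul_right ?_ (pow_pos hzpow 2)⟩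
  calc (n + 1 : ℝ) * (‖z‖ ^ (n + 1)) ^ 2 ≤ ‖x‖ ^ 2 := hx_sq
    _ ≤ _ := by rw [← mul_pow]; gcongr

/-- For `0 < |z| ≤ 1`, the operator norm (w.r.t. the Euclidean norm on `ℂ^k`) of
`(J_k - z I)⁻¹` tends to infinity as `k → ∞`. -/
theorem stmt4 (z : ℂ) (h0 : 0 < ‖z‖) (h1 : ‖z‖ ≤ 1) :
    Filter.Tendsto
      (fun k : ℕ =>
        ‖Matrix.toEuclideanCLM (𝕜 := ℂ) (n := Fin k) ((JordanBlock k - z • 1)⁻¹)‖)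
      Filter.atTop Filter.atTop := by
  rw [← Filter.tendsto_add_atTop_iff_nat 1]
  refine Filter.tendsto_atTop_mono (f := fun n : ℕ => √(n + 1 : ℝ)) (fun n => ?_) ?_
  · exact_mod_cast sqrt_le_opNorm_inv_JordanBlock_sub_smul_one n (norm_pos_iff.mp h0) h1
  · exact Real.tendsto_sqrt_atTop.comp (tendsto_natCast_atTop_atTop.atTop_add tendsto_const_nhds)
end

section
/- Let w : ℕ → {0,1} and let H be the bounded operator on ℓ²(ℕ) determined by H e_0 = 0 and H e_n = w(n) e_{n−1} for n ≥ 1 (a weighted backward shift with 0/1 weights). If the runs of consecutive 1's in w are unbounded, i.e. for every m ∈ ℕ there exists n ≥ 1 with w(n) = w(n+1) = ⋯ = w(n+m) = 1, then Sp(H) = {z ∈ ℂ : |z| ≤ 1}, the closed unit disk. -/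
/-!
`H` moves coordinate `k + 1` to `k` with a weight of modulus at most one, so it is a contraction
and its spectrum lies in the closed unit disc. Conversely, a run of ones that starts right after
a block boundary `a` gives a Jordan chain `H e_a = 0`, `H e_(a+i+1) = e_(a+i)` of any prescribed
length `N`. For `‖z‖ < 1` the truncated eigenvector `u = ∑_{i ≤ N} z^i e_(a+i)` has `‖u‖ ≥ 1` and
`z u - H u = z^(N+1) e_(a+N)`, so `z - H` is not bounded below and `z` is in the spectrum.
The spectrum is closed, hence contains the closed disc.
-/

open Finset
open scoped ENNReal

section SpectrumCriterion

variable {𝕜 E : Type*} [NontriviallyNormedField 𝕜] [NormedAddCommGroup E] [NormedSpace 𝕜 E]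

theorem mem_spectrum_of_forall_exists_norm_smul_sub_lt (T : E →L[𝕜] E) (z : 𝕜)
    (h : ∀ ε > 0, ∃ u : E, ‖z • u - T u‖ < ε * ‖u‖) : z ∈ spectrum 𝕜 T := by
  rintro ⟨B, hB⟩
  set C := ‖(↑B⁻¹ : E →L[𝕜] E)‖
  obtain ⟨u, hu⟩ := h (1 / (C + 1)) (by positivity)
  have hu_pos : 0 < ‖u‖ := pos_of_mul_pos_right ((norm_nonneg _).trans_lt hu) (by positivity)
  have hinv : (↑B⁻¹ : E →L[𝕜] E) (z • u - T u) = u := by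
    rw [show z • u - T u = (B : E →L[𝕜] E) u by simp [hB, Algebra.algebraMap_eq_smul_one],
      ← mul_apply_eq_comp, Units.inv_mul, one_apply_eq_self]
  have hC : C * (1 / (C + 1)) < 1 := by
    rw [mul_one_div, div_lt_one (by positivity)]
    linarith
  have : ‖u‖ < ‖u‖ :=
    calc ‖u‖ = ‖(↑B⁻¹ : E →L[𝕜] E) (z • u - T u)‖ := by rw [hinv]
      _ ≤ C * ‖z • u - T u‖ := ContinuousLinearMap.le_opNorm _ _
      _ ≤ C * (1 / (C + 1) * ‖u‖) := by gcongr
      _ < ‖u‖ := by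
        rw [← mul_assoc]
        exact mul_lt_of_lt_one_left hu_pos hC
  exact this.false

end SpectrumCriterion

theorem smul_sub_apply_sum_geom_chain {R M F : Type*} [CommRing R] [AddCommGroup M] [Module R M]
    [FunLike F M M] [LinearMapClass F R M M] (T : F) (v : ℕ → M) (z : R) (N : ℕ)
    (h0 : T (v 0) = 0) (hsucc : ∀ i < N, T (v (i + 1)) = v i) :
    z • ∑ i ∈ range (N + 1), z ^ i • v i - T (∑ i ∈ range (N + 1), z ^ i • v i) =
      z ^ (N + 1) • v N := by
  induction N with
  | zero => simp [h0]
  | succ N ih =>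
    rw [sum_range_succ, smul_add, map_add, add_sub_add_comm, ih fun i hi => hsucc i (by omega),
      map_smul, hsucc N N.lt_succ_self, smul_smul, ← pow_succ', add_sub_cancel]

theorem lp.norm_le_of_norm_apply_le_comp {α β : Type*} {E : α → Type*} {F : β → Type*}
    [∀ i, NormedAddCommGroup (E i)] [∀ k, NormedAddCommGroup (F k)]
    {p : ℝ≥0∞} (hp : 0 < p.toReal) {f : lp E p} {g : lp F p}
    {σ : β → α} (hσ : σ.Injective) (h : ∀ k, ‖g k‖ ≤ ‖f (σ k)‖) : ‖g‖ ≤ ‖f‖ := by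
  refine lp.norm_le_of_forall_sum_le hp (lp.norm_nonneg' f) fun s => ?_
  calc ∑ k ∈ s, ‖g k‖ ^ p.toReal ≤ ∑ k ∈ s, ‖f (σ k)‖ ^ p.toReal := by gcongr; exact h _
    _ = ∑ i ∈ s.map ⟨σ, hσ⟩, ‖f i‖ ^ p.toReal := by rw [sum_map]; rfl
    _ ≤ ‖f‖ ^ p.toReal := lp.sum_rpow_le_norm_rpow hp f _

local notation "ℓ²" => lp (fun _ : ℕ => ℂ) 2

namespace WeightedShift

variable {w : ℕ → ℂ} {H : ℓ² →L[ℂ] ℓ²}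

theorem apply_apply (hH0 : H (lp.single 2 0 1) = 0)
    (hHn : ∀ n : ℕ, 1 ≤ n → H (lp.single 2 n 1) = w n • lp.single 2 (n - 1) 1)
    (x : ℓ²) (k : ℕ) : H x k = w (k + 1) * x (k + 1) := by
  have hcoord : (lp.evalCLM ℂ (fun _ : ℕ => ℂ) 2 k).comp H =
      w (k + 1) • lp.evalCLM ℂ (fun _ : ℕ => ℂ) 2 (k + 1) := by
    refine lp.ext_continuousLinearMap (by norm_num) fun n => ContinuousLinearMap.ext_ring ?_
    rcases n with _ | n
    · simp [hH0, lp.evalCLM, lp.single_apply]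
    · by_cases hkn : k = n <;> simp [hHn (n + 1) (by omega), lp.evalCLM, lp.single_apply, hkn]
  simpa [lp.evalCLM] using congr($hcoord x)

theorem norm_apply_le (hw : ∀ n, w n = 0 ∨ w n = 1) (hH0 : H (lp.single 2 0 1) = 0)
    (hHn : ∀ n : ℕ, 1 ≤ n → H (lp.single 2 n 1) = w n • lp.single 2 (n - 1) 1) (x : ℓ²) :
    ‖H x‖ ≤ ‖x‖ := by
  refine lp.norm_le_of_norm_apply_le_comp (by norm_num) Nat.succ_injective fun k => ?_
  rw [apply_apply hH0 hHn, norm_mul]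
  refine mul_le_of_le_one_left (norm_nonneg _) ?_
  rcases hw (k + 1) with h | h <;> simp [h]

theorem exists_jordan_chain (hw : ∀ n, w n = 0 ∨ w n = 1) (hH0 : H (lp.single 2 0 1) = 0)
    (hHn : ∀ n : ℕ, 1 ≤ n → H (lp.single 2 n 1) = w n • lp.single 2 (n - 1) 1)
    (hrun : ∀ m : ℕ, ∃ n : ℕ, 1 ≤ n ∧ ∀ k ≤ m, w (n + k) = 1) (N : ℕ) :
    ∃ a, H (lp.single 2 a 1) = 0 ∧
      ∀ i < N, H (lp.single 2 (a + i + 1) 1) = lp.single 2 (a + i) 1 := by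
  classical
  obtain ⟨n, -, hn⟩ := hrun N
  -- the last block boundary at or before the start `n` of the run
  set a := Nat.findGreatest (fun j => j = 0 ∨ w j = 0) n
  have ha : a = 0 ∨ w a = 0 :=
    Nat.findGreatest_spec (P := fun j => j = 0 ∨ w j = 0) (Nat.zero_le n) (Or.inl rfl)
  have hwa : ∀ j, a < j → j ≤ n + N → w j = 1 := by
    intro j haj hj
    by_cases hjn : j ≤ n
    · have := Nat.findGreatest_is_greatest haj hjn
      exact (hw j).resolve_left fun h => this (Or.inr h)
    · simpa [show n + (j - n) = j by omega] using hn (j - n) (by omega)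
  have hle : a ≤ n := Nat.findGreatest_le n
  refine ⟨a, ?_, fun i hi => ?_⟩
  · rcases Nat.eq_zero_or_pos a with h0 | hpos
    · rw [h0, hH0]
    · rw [hHn a hpos, ha.resolve_left hpos.ne', zero_smul]
  · rw [hHn _ (by omega), hwa _ (by omega) (by omega), one_smul, Nat.add_sub_cancel]

theorem mem_spectrum_of_norm_lt_one (hw : ∀ n, w n = 0 ∨ w n = 1)
    (hH0 : H (lp.single 2 0 1) = 0)
    (hHn : ∀ n : ℕ, 1 ≤ n → H (lp.single 2 n 1) = w n • lp.single 2 (n - 1) 1)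
    (hrun : ∀ m : ℕ, ∃ n : ℕ, 1 ≤ n ∧ ∀ k ≤ m, w (n + k) = 1) {z : ℂ} (hz : ‖z‖ < 1) :
    z ∈ spectrum ℂ H := by
  refine mem_spectrum_of_forall_exists_norm_smul_sub_lt H z fun ε hε => ?_
  obtain ⟨N, hN⟩ := exists_pow_lt_of_lt_one hε hz
  obtain ⟨a, ha, hchain⟩ := exists_jordan_chain hw hH0 hHn hrun N
  set u : ℓ² := ∑ i ∈ range (N + 1), z ^ i • lp.single 2 (a + i) 1
  have hu : 1 ≤ ‖u‖ := by
    have hua : u a = 1 := by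
      simp only [u, lp.coeFn_sum, lp.coeFn_smul]
      rw [Finset.sum_apply]
      simp [lp.single_apply, Pi.single_apply]
    simpa [hua] using lp.norm_apply_le_norm two_ne_zero u a
  refine ⟨u, ?_⟩
  rw [smul_sub_apply_sum_geom_chain H (fun i => lp.single 2 (a + i) 1) z N ha hchain]
  calc ‖z ^ (N + 1) • lp.single (E := fun _ : ℕ => ℂ) 2 (a + N) 1‖ = ‖z‖ ^ (N + 1) := by
        simp [norm_smul, lp.norm_single]
    _ ≤ ‖z‖ ^ N := pow_le_pow_of_le_one (norm_nonneg z) hz.le N.le_succ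
    _ < ε := hN
    _ ≤ ε * ‖u‖ := le_mul_of_one_le_right hε.le hu

end WeightedShift

/-- Let `H` be the bounded weighted backward shift on `ℓ²(ℕ)` with weights
`w : ℕ → {0,1}` (i.e. `H e_0 = 0` and `H e_n = w(n) e_{n-1}` for `n ≥ 1`). If the runs
of consecutive `1`'s in `w` are unbounded (for every `m` there is `n ≥ 1` with
`w(n) = w(n+1) = ⋯ = w(n+m) = 1`), then `Sp(H)` is the closed unit disk. -/
theorem stmt6 (w : ℕ → ℂ) (hw : ∀ n, w n = 0 ∨ w n = 1)
    (H : lp (fun _ : ℕ => ℂ) 2 →L[ℂ] lp (fun _ : ℕ => ℂ) 2)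
    (hH0 : H (lp.single 2 0 1) = 0)
    (hHn : ∀ n : ℕ, 1 ≤ n → H (lp.single 2 n 1) = w n • lp.single 2 (n - 1) 1)
    (hrun : ∀ m : ℕ, ∃ n : ℕ, 1 ≤ n ∧ ∀ k ≤ m, w (n + k) = 1) :
    spectrum ℂ H = Metric.closedBall (0 : ℂ) 1 := by
  have hnorm : ‖H‖ * ‖(1 : ℓ² →L[ℂ] ℓ²)‖ ≤ 1 :=
    mul_le_one₀ (H.opNorm_le_bound zero_le_one fun x => by
      simpa using WeightedShift.norm_apply_le hw hH0 hHn x)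
      (norm_nonneg _) ContinuousLinearMap.norm_id_le
  refine (spectrum.subset_closedBall_norm_mul H).trans
    (Metric.closedBall_subset_closedBall hnorm) |>.antisymm ?_
  have hball : Metric.ball (0 : ℂ) 1 ⊆ spectrum ℂ H := fun z hz =>
    WeightedShift.mem_spectrum_of_norm_lt_one hw hH0 hHn hrun (mem_ball_zero_iff.mp hz)
  simpa [closure_ball (0 : ℂ) one_ne_zero, (spectrum.isClosed H).closure_eq] using
    closure_mono hball
end

section
/- Let X be a complex Banach space, H a bounded linear operator on X, and z ∈ ℂ with H − zI invertible. Let Q_1, …, Q_m be bounded projections on X (Q_n² = Q_n) satisfying Q_n Q_{n'} = 0 for n ≠ n', Q_n H = H Q_n for all n, and H Q_n = λ_n Q_n for scalars λ_1, …, λ_m ∈ ℂ with λ_n ≠ z for all n. Set S_m = Q_1 + ⋯ + Q_m and let R = sup{‖(H − zI)^{-1} y‖ : y ∈ Ran(I − S_m), ‖y‖ ≤ 1}. Then ‖(H − zI)^{-1}‖ ≤ (1 + Σ_{n=1}^m ‖Q_n‖) · R + Σ_{n=1}^m ‖Q_n‖ / |λ_n − z|. -/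
/-!
Split the identity as `1 = (1 - S) + ∑ Qₙ`. On the range of `1 - S` the resolvent has norm at
most `R`, and `‖1 - S‖ ≤ 1 + ∑ ‖Qₙ‖`. On each `Qₙ` the resolvent acts as the scalar
`(λₙ - z)⁻¹`, because `(H - z) Qₙ = (λₙ - z) Qₙ`.
-/

namespace ContinuousLinearMap

variable {𝕜 E F G : Type*} [RCLike 𝕜]
  [NormedAddCommGroup E] [NormedSpace 𝕜 E] [NormedAddCommGroup F] [NormedSpace 𝕜 F]
  [NormedAddCommGroup G] [NormedSpace 𝕜 G]

noncomputable def normOn (f : E →L[𝕜] F) (s : Set E) : ℝ :=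
  sSup {r : ℝ | ∃ y : E, y ∈ s ∧ ‖y‖ ≤ 1 ∧ r = ‖f y‖}

theorem normOn_nonneg (f : E →L[𝕜] F) (s : Set E) : 0 ≤ normOn f s :=
  Real.sSup_nonneg <| by rintro r ⟨y, -, -, rfl⟩; exact norm_nonneg _

theorem le_normOn_mul_norm (f : E →L[𝕜] F) {s : Set E}
    (hs : ∀ (c : 𝕜), ∀ y ∈ s, c • y ∈ s) {y : E} (hy : y ∈ s) :
    ‖f y‖ ≤ normOn f s * ‖y‖ := by
  rcases eq_or_ne y 0 with rfl | hy0
  · simp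
  have hbdd : BddAbove {r : ℝ | ∃ y : E, y ∈ s ∧ ‖y‖ ≤ 1 ∧ r = ‖f y‖} := by
    refine ⟨‖f‖, ?_⟩
    rintro r ⟨y, -, hy1, rfl⟩
    exact f.le_of_opNorm_le_of_le le_rfl hy1 |>.trans_eq (mul_one _)
  have hny : 0 < ‖y‖ := norm_pos_iff.mpr hy0
  have hc : ‖((‖y‖ : 𝕜))⁻¹‖ = ‖y‖⁻¹ := by simp
  have hunit : ‖f ((‖y‖ : 𝕜)⁻¹ • y)‖ ≤ normOn f s :=
    le_csSup hbdd ⟨_, hs _ y hy, by rw [norm_smul, hc, inv_mul_cancel₀ hny.ne'], rfl⟩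
  rw [map_smul, norm_smul, hc, inv_mul_le_iff₀ hny] at hunit
  linarith

theorem opNorm_comp_le_normOn_range_mul (f : F →L[𝕜] G) (g : E →L[𝕜] F) :
    ‖f.comp g‖ ≤ normOn f (Set.range g) * ‖g‖ := by
  refine opNorm_le_bound _ (mul_nonneg (normOn_nonneg f _) (norm_nonneg g)) fun x => ?_
  have hrange : ∀ (c : 𝕜), ∀ y ∈ Set.range g, c • y ∈ Set.range g := by
    rintro c _ ⟨x, rfl⟩
    exact ⟨c • x, map_smul g c x⟩
  calc ‖f (g x)‖ ≤ normOn f (Set.range g) * ‖g x‖ := le_normOn_mul_norm f hrange ⟨x, rfl⟩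
    _ ≤ normOn f (Set.range g) * (‖g‖ * ‖x‖) := by gcongr; exacts [normOn_nonneg f _, g.le_opNorm x]
    _ = normOn f (Set.range g) * ‖g‖ * ‖x‖ := (mul_assoc _ _ _).symm

end ContinuousLinearMap

theorem Ring.inverse_sub_smul_one_mul_of_mul_eq_smul {𝕜 A : Type*} [Field 𝕜] [Ring A]
    [Algebra 𝕜 A] {a q : A} {z μ : 𝕜} (ha : IsUnit (a - z • 1)) (hq : a * q = μ • q)
    (hμ : μ ≠ z) : Ring.inverse (a - z • 1) * q = (μ - z)⁻¹ • q := by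
  have hshift : (a - z • 1) * q = (μ - z) • q := by
    rw [sub_mul, hq, smul_one_mul, sub_smul]
  calc Ring.inverse (a - z • 1) * q
      = (μ - z)⁻¹ • (Ring.inverse (a - z • 1) * ((a - z • 1) * q)) := by
        rw [hshift, mul_smul_comm, smul_smul, inv_mul_cancel₀ (sub_ne_zero.mpr hμ), one_smul]
    _ = (μ - z)⁻¹ • q := by rw [← mul_assoc, Ring.inverse_mul_cancel _ ha, one_mul]

theorem stmt9_general {X : Type*} [NormedAddCommGroup X] [NormedSpace ℂ X]
    (H : X →L[ℂ] X) (z : ℂ) (hz : IsUnit (H - z • 1))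
    (m : ℕ) (Q : Fin m → X →L[ℂ] X) (lam : Fin m → ℂ)
    (heig : ∀ n, H * Q n = lam n • Q n)
    (hne : ∀ n, lam n ≠ z) :
    ‖Ring.inverse (H - z • 1)‖ ≤
      (1 + ∑ n, ‖Q n‖) *
        sSup {r : ℝ | ∃ y : X, y ∈ Set.range ⇑((1 : X →L[ℂ] X) - ∑ n, Q n) ∧ ‖y‖ ≤ 1 ∧
          r = ‖Ring.inverse (H - z • 1) y‖}
      + ∑ n, ‖Q n‖ / ‖lam n - z‖ := by
  set T := Ring.inverse (H - z • 1)
  set P : X →L[ℂ] X := 1 - ∑ n, Q n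
  have hsplit : T = T * P + ∑ n, (lam n - z)⁻¹ • Q n := by
    simp only [P, T, mul_sub, mul_one, Finset.mul_sum,
      Ring.inverse_sub_smul_one_mul_of_mul_eq_smul hz (heig _) (hne _), sub_add_cancel]
  have hP : ‖P‖ ≤ 1 + ∑ n, ‖Q n‖ :=
    (norm_sub_le _ _).trans (add_le_add ContinuousLinearMap.norm_id_le (norm_sum_le _ _))
  calc ‖T‖ = ‖T * P + ∑ n, (lam n - z)⁻¹ • Q n‖ := congrArg norm hsplit
    _ ≤ ‖T * P‖ + ∑ n, ‖(lam n - z)⁻¹ • Q n‖ := norm_add_le_of_le le_rfl (norm_sum_le _ _)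
    _ ≤ T.normOn (Set.range P) * (1 + ∑ n, ‖Q n‖) + ∑ n, ‖Q n‖ / ‖lam n - z‖ := by
        gcongr with n
        · exact (T.opNorm_comp_le_normOn_range_mul P).trans
            (mul_le_mul_of_nonneg_left hP (T.normOn_nonneg _))
        · rw [norm_smul, norm_inv, inv_mul_eq_div]
    _ = _ := by rw [mul_comm]; rfl

/-- Resolvent norm bound through a finite family of mutually orthogonal spectral
projections: with `S = Q_1 + ⋯ + Q_m` and
`R = sup {‖(H - zI)⁻¹ y‖ : y ∈ Ran(I - S), ‖y‖ ≤ 1}`, we have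
`‖(H - zI)⁻¹‖ ≤ (1 + Σ ‖Q_n‖) R + Σ ‖Q_n‖ / |λ_n - z|`. -/
theorem stmt9 {X : Type*} [NormedAddCommGroup X] [NormedSpace ℂ X] [CompleteSpace X]
    (H : X →L[ℂ] X) (z : ℂ) (hz : IsUnit (H - z • 1))
    (m : ℕ) (Q : Fin m → X →L[ℂ] X) (lam : Fin m → ℂ)
    (hproj : ∀ n, Q n * Q n = Q n)
    (horth : ∀ n n', n ≠ n' → Q n * Q n' = 0)
    (hcomm : ∀ n, Q n * H = H * Q n)
    (heig : ∀ n, H * Q n = lam n • Q n)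
    (hne : ∀ n, lam n ≠ z) :
    ‖Ring.inverse (H - z • 1)‖ ≤
      (1 + ∑ n, ‖Q n‖) *
        sSup {r : ℝ | ∃ y : X, y ∈ Set.range ⇑((1 : X →L[ℂ] X) - ∑ n, Q n) ∧ ‖y‖ ≤ 1 ∧
          r = ‖Ring.inverse (H - z • 1) y‖}
      + ∑ n, ‖Q n‖ / ‖lam n - z‖ :=
  stmt9_general H z hz m Q lam heig hne
end

section
/- Let X be a complex Banach space, H a bounded linear operator on X, M > 0 and λ ∈ ℝ, and suppose that ‖exp(−tH)‖ ≤ M e^{−λt} for all real t ≥ 0, where exp denotes the operator exponential. Then every z ∈ ℂ with Re(z) < λ lies in the resolvent set of H (i.e. H − zI is invertible), and ‖(H − zI)^{-1}‖ ≤ M / (λ − Re(z)). -/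
/-!
For `Re z < λ` the group `t ↦ exp (t • (z - H)) = e^{z t} exp (-t H)` decays like
`M e^{-(λ - Re z) t}`, so its Laplace integral `R = ∫₀^∞ exp (t • (z - H)) dt` converges
absolutely, with `‖R‖ ≤ M / (λ - Re z)`. The derivative of `exp (t • a)` is
`exp (t • a) * a = a * exp (t • a)`, and `exp (t • a) → 0` as `t → ∞`, so the fundamental theorem
of calculus gives `R * a = a * R = -1` for `a = z - H`: `R` is the inverse of `H - z`.
-/

open MeasureTheory Set Filter NormedSpace Topology

section LaplaceTransform

variable {A : Type*} [NormedRing A] [NormedAlgebra ℂ A] {a : A} {C b : ℝ}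

def ExpDecayBound (a : A) (C b : ℝ) : Prop :=
  ∀ t : ℝ, 0 ≤ t → ‖exp ((t : ℂ) • a)‖ ≤ C * Real.exp (-b * t)

theorem exp_ofReal_smul_mul_comm (a : A) (t : ℝ) :
    exp ((t : ℂ) • a) * a = a * exp ((t : ℂ) • a) :=
  ((Commute.refl a).smul_left _).exp_left.eq

theorem integral_const_mul_exp_neg_mul_Ioi (hb : 0 < b) :
    ∫ t in Ioi (0 : ℝ), C * Real.exp (-b * t) = C / b := by
  rw [integral_const_mul, integral_exp_mul_Ioi (neg_neg_of_pos hb)]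
  field_simp
  simp

theorem ExpDecayBound.tendsto_atTop (h : ExpDecayBound a C b) (hb : 0 < b) :
    Tendsto (fun t : ℝ => exp ((t : ℂ) • a)) atTop (𝓝 0) := by
  have hbound : Tendsto (fun t : ℝ => C * Real.exp (-b * t)) atTop (𝓝 0) := by
    simpa using (Real.tendsto_exp_neg_atTop_nhds_zero.comp
      (tendsto_id.const_mul_atTop hb)).const_mul C
  exact squeeze_zero_norm' (eventually_ge_atTop 0 |>.mono h) hbound

theorem ExpDecayBound.norm_integral_le (h : ExpDecayBound a C b) (hb : 0 < b) :
    ‖∫ t in Ioi (0 : ℝ), exp ((t : ℂ) • a)‖ ≤ C / b := by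
  rw [← integral_const_mul_exp_neg_mul_Ioi hb]
  refine norm_integral_le_of_norm_le ((exp_neg_integrableOn_Ioi 0 hb).const_mul C) ?_
  filter_upwards [self_mem_ae_restrict measurableSet_Ioi] with t ht
  exact h t ht.le

variable [CompleteSpace A]

theorem hasDerivAt_exp_ofReal_smul (a : A) (t : ℝ) :
    HasDerivAt (fun s : ℝ => exp ((s : ℂ) • a)) (exp ((t : ℂ) • a) * a) t := by
  simpa [Function.comp_def] using
    (hasDerivAt_exp_smul_const a (t : ℂ)).scomp t Complex.ofRealCLM.hasDerivAt

theorem continuous_exp_ofReal_smul (a : A) : Continuous fun t : ℝ => exp ((t : ℂ) • a) :=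
  continuous_iff_continuousAt.2 fun t => (hasDerivAt_exp_ofReal_smul a t).continuousAt

theorem ExpDecayBound.integrableOn_Ioi (h : ExpDecayBound a C b) (hb : 0 < b) :
    IntegrableOn (fun t : ℝ => exp ((t : ℂ) • a)) (Ioi 0) := by
  refine ((exp_neg_integrableOn_Ioi 0 hb).const_mul C).mono'
    (continuous_exp_ofReal_smul a).aestronglyMeasurable ?_
  filter_upwards [self_mem_ae_restrict measurableSet_Ioi] with t ht
  exact h t ht.le

theorem ExpDecayBound.integral_mul (h : ExpDecayBound a C b) (hb : 0 < b) :
    (∫ t in Ioi (0 : ℝ), exp ((t : ℂ) • a)) * a = -1 := by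
  have hint := h.integrableOn_Ioi hb
  rw [← integral_mul_const_of_integrable hint,
    integral_Ioi_of_hasDerivAt_of_tendsto' (fun t _ => hasDerivAt_exp_ofReal_smul a t)
      (hint.mul_const a) (h.tendsto_atTop hb)]
  simp

theorem ExpDecayBound.mul_integral (h : ExpDecayBound a C b) (hb : 0 < b) :
    a * (∫ t in Ioi (0 : ℝ), exp ((t : ℂ) • a)) = -1 := by
  rw [← h.integral_mul hb, ← integral_const_mul_of_integrable (h.integrableOn_Ioi hb),
    ← integral_mul_const_of_integrable (h.integrableOn_Ioi hb)]
  simp_rw [exp_ofReal_smul_mul_comm]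

theorem ExpDecayBound.isUnit_neg_and_norm_inverse_le (h : ExpDecayBound a C b) (hb : 0 < b) :
    IsUnit (-a) ∧ ‖Ring.inverse (-a)‖ ≤ C / b := by
  let u : Aˣ := ⟨-a, ∫ t in Ioi (0 : ℝ), exp ((t : ℂ) • a),
    by rw [neg_mul, h.mul_integral hb, neg_neg], by rw [mul_neg, h.integral_mul hb, neg_neg]⟩
  refine ⟨u.isUnit, ?_⟩
  rw [show -a = u from rfl, Ring.inverse_unit]
  exact h.norm_integral_le hb

theorem exp_smul_smul_one_sub (t z : ℂ) (h : A) :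
    exp (t • (z • 1 - h)) = Complex.exp (t * z) • exp ((-t) • h) := by
  let +nondep : NormedAlgebra ℚ A := .restrictScalars ℚ ℂ A
  have hsplit : t • (z • 1 - h) = algebraMap ℂ A (t * z) + (-t) • h := by
    rw [Algebra.algebraMap_eq_smul_one, smul_sub, smul_smul, neg_smul, sub_eq_add_neg]
  rw [hsplit, exp_add_of_commute (Algebra.commutes _ _), ← algebraMap_exp_comm,
    Algebra.algebraMap_eq_smul_one, smul_one_mul, Complex.exp_eq_exp_ℂ]

theorem expDecayBound_smul_one_sub {h : A} {M lam : ℝ}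
    (hexp : ∀ t : ℝ, 0 ≤ t → ‖exp ((-(t : ℂ)) • h)‖ ≤ M * Real.exp (-(lam * t))) (z : ℂ) :
    ExpDecayBound (z • 1 - h) M (lam - z.re) := by
  intro t ht
  rw [exp_smul_smul_one_sub, norm_smul, Complex.norm_exp]
  calc Real.exp (t * z).re * ‖exp ((-(t : ℂ)) • h)‖
      ≤ Real.exp (t * z.re) * (M * Real.exp (-(lam * t))) := by
        simpa using mul_le_mul_of_nonneg_left (hexp t ht) (Real.exp_nonneg (t * z.re))
    _ = M * Real.exp (-(lam - z.re) * t) := by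
        rw [mul_left_comm, ← Real.exp_add]
        ring_nf

end LaplaceTransform

theorem stmt10_general {X : Type*} [NormedAddCommGroup X] [NormedSpace ℂ X] [CompleteSpace X]
    (H : X →L[ℂ] X) (M : ℝ) (lam : ℝ)
    (hexp : ∀ t : ℝ, 0 ≤ t →
      ‖NormedSpace.exp ((-(t : ℂ)) • H)‖ ≤ M * Real.exp (-(lam * t)))
    (z : ℂ) (hz : z.re < lam) :
    IsUnit (H - z • 1) ∧ ‖Ring.inverse (H - z • 1)‖ ≤ M / (lam - z.re) := by
  simpa only [neg_sub] using
    (expDecayBound_smul_one_sub (h := H) hexp z).isUnit_neg_and_norm_inverse_le (sub_pos.2 hz)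

/-- Bounded-operator Hille–Yosida resolvent estimate: if `‖exp(-tH)‖ ≤ M e^{-λ t}` for all
`t ≥ 0`, then every `z` with `Re(z) < λ` is in the resolvent set of `H` and
`‖(H - zI)⁻¹‖ ≤ M / (λ - Re(z))`. -/
theorem stmt10 {X : Type*} [NormedAddCommGroup X] [NormedSpace ℂ X] [CompleteSpace X]
    (H : X →L[ℂ] X) (M : ℝ) (hM : 0 < M) (lam : ℝ)
    (hexp : ∀ t : ℝ, 0 ≤ t →
      ‖NormedSpace.exp ((-(t : ℂ)) • H)‖ ≤ M * Real.exp (-(lam * t)))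
    (z : ℂ) (hz : z.re < lam) :
    IsUnit (H - z • 1) ∧ ‖Ring.inverse (H - z • 1)‖ ≤ M / (lam - z.re) :=
  stmt10_general H M lam hexp z hz
end

section
/- Let 𝓗 be a complex Hilbert space, H a bounded linear operator on 𝓗, and Θ a bounded self-adjoint operator on 𝓗 that is positive and invertible (there is c > 0 with ⟨Θx, x⟩ ≥ c‖x‖² for all x) and satisfies the quasi-Hermiticity relation H*Θ = ΘH. Then for every z ∈ ℂ not in Sp(H), dist(z, Sp(H)) ≤ √(‖Θ‖ · ‖Θ^{-1}‖) · ‖(H − zI)^{-1}‖^{-1}; equivalently, ‖(H − zI)^{-1}‖ ≤ √(‖Θ‖ · ‖Θ^{-1}‖) / dist(z, Sp(H)). -/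
/-!
With `S = √Θ`, positive and invertible, the relation `H* Θ = Θ H` says exactly that
`A = S H S⁻¹` is self-adjoint. Conjugation preserves the spectrum and changes resolvent norms by
at most the factor `‖S‖ ‖S⁻¹‖`, which the C⋆-identity turns into `√(‖Θ‖ ‖Θ⁻¹‖)`. For the
self-adjoint `A` the resolvent is normal, so its norm is its spectral radius `1 / dist(z, Sp A)`.
-/

open scoped InnerProductSpace

theorem Ring.inverse_neg {R : Type*} [Ring R] (x : R) : Ring.inverse (-x) = -Ring.inverse x := by
  by_cases hx : IsUnit x
  · obtain ⟨u, rfl⟩ := hx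
    rw [← Units.val_neg, Ring.inverse_unit, Ring.inverse_unit]
    simp
  · rw [Ring.inverse_non_unit _ hx, Ring.inverse_non_unit _ (by rwa [IsUnit.neg_iff]), neg_zero]

theorem Ring.inverse_units_conj {M₀ : Type*} [MonoidWithZero M₀] (u : M₀ˣ) (x : M₀) :
    Ring.inverse (u * x * ↑u⁻¹) = u * Ring.inverse x * ↑u⁻¹ := by
  by_cases hx : IsUnit x
  · obtain ⟨v, rfl⟩ := hx
    rw [← Units.val_mul, ← Units.val_mul, Ring.inverse_unit, Ring.inverse_unit]
    simp [mul_assoc]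
  · rw [Ring.inverse_non_unit _ hx, Ring.inverse_non_unit, mul_zero, zero_mul]
    simpa using hx

theorem resolvent_units_conj {R A : Type*} [CommSemiring R] [Ring A] [Algebra R A] (a : A)
    (u : Aˣ) (r : R) : resolvent (u * a * ↑u⁻¹) r = u * resolvent a r * ↑u⁻¹ := by
  rw [resolvent, resolvent, ← Ring.inverse_units_conj]
  congr 1
  simp [mul_sub, sub_mul, Algebra.right_comm]

theorem Units.inv_norm_conj_le {R : Type*} [NormedRing R] (u : Rˣ) (y : R) :
    ‖u * y * ↑u⁻¹‖⁻¹ ≤ ‖(u : R)‖ * ‖(↑u⁻¹ : R)‖ * ‖y‖⁻¹ := by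
  rcases eq_or_ne y 0 with rfl | hy
  · simp
  have hconj : u * y * ↑u⁻¹ ≠ 0 := by simpa using hy
  have hle : ‖y‖ ≤ ‖(↑u⁻¹ : R)‖ * ‖u * y * ↑u⁻¹‖ * ‖(u : R)‖ := by
    calc ‖y‖ = ‖↑u⁻¹ * (u * y * ↑u⁻¹) * u‖ := by simp [mul_assoc]
      _ ≤ _ := norm_mul₃_le
  rw [← div_eq_mul_inv, le_div_iff₀ (norm_pos_iff.2 hy), inv_mul_le_iff₀ (norm_pos_iff.2 hconj)]
  exact hle.trans_eq (by ring)

theorem IsSelfAdjoint.units_conj_of_star_mul_eq {M : Type*} [Monoid M] [StarMul M] {s : Mˣ}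
    (hs : IsSelfAdjoint (s : M)) {h : M} (hh : star h * (s * s) = s * s * h) :
    IsSelfAdjoint (s * h * ↑s⁻¹ : M) := by
  have hs_inv : star (↑s⁻¹ : M) = ↑s⁻¹ := by
    rw [← Units.coe_star_inv, show star s = s from Units.ext hs]
  calc star (s * h * ↑s⁻¹ : M) = ↑s⁻¹ * star h * s := by
        rw [star_mul, star_mul, hs_inv, hs.star_eq, mul_assoc]
    _ = ↑s⁻¹ * (star h * (s * s)) * ↑s⁻¹ := by simp [mul_assoc]
    _ = ↑s⁻¹ * (s * s * h) * ↑s⁻¹ := by rw [hh]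
    _ = s * h * ↑s⁻¹ := by simp [mul_assoc]

theorem IsSelfAdjoint.sqrt_norm_mul_self_mul_norm_inverse {A : Type*} [NormedRing A] [StarRing A]
    [CStarRing A] {u : Aˣ} (hu : IsSelfAdjoint (u : A)) :
    √(‖(u * u : A)‖ * ‖Ring.inverse (u * u : A)‖) = ‖(u : A)‖ * ‖(↑u⁻¹ : A)‖ := by
  have hu_inv : IsSelfAdjoint (↑u⁻¹ : A) := by
    rw [← Ring.inverse_unit]; exact hu.ringInverse
  have h_norm_sq {x : A} (hx : IsSelfAdjoint x) : ‖x * x‖ = ‖x‖ * ‖x‖ := by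
    rw [← CStarRing.norm_star_mul_self, hx.star_eq]
  rw [← Units.val_mul, Ring.inverse_unit, mul_inv_rev, Units.val_mul, Units.val_mul,
    h_norm_sq hu, h_norm_sq hu_inv, show ∀ p q : ℝ, p * p * (q * q) = (p * q) ^ 2 by intros; ring,
    Real.sqrt_sq (by positivity)]

instance IsStarNormal.algebraMap_sub {R A : Type*} [CommSemiring R] [StarRing R] [Ring A]
    [StarRing A] [Algebra R A] [StarModule R A] (r : R) (a : A) [IsStarNormal a] :
    IsStarNormal (algebraMap R A r - a) := by
  rw [Algebra.algebraMap_eq_smul_one]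
  exact ((Commute.one_left (star a)).smul_left r).isStarNormal_sub

theorem IsStarNormal.infDist_spectrum_le {A : Type*} [CStarAlgebra A] (a : A) [IsStarNormal a]
    (z : ℂ) : Metric.infDist z (spectrum ℂ a) ≤ ‖resolvent a z‖⁻¹ := by
  by_cases hz : z ∈ spectrum ℂ a
  · rw [Metric.infDist_zero_of_mem hz]
    positivity
  rcases subsingleton_or_nontrivial A with hA | hA
  · simp [spectrum.of_subsingleton]
  have hres : z ∈ resolventSet ℂ a := Set.notMem_compl_iff.mp hz
  set u := (spectrum.mem_resolventSet_iff.mp hres).unit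
  have : IsStarNormal (u : A) := by rw [IsUnit.unit_spec]; infer_instance
  -- the norm of the normal element `u⁻¹` is its spectral radius, attained at some `μ`
  obtain ⟨μ, hμ, hμ_norm⟩ := spectrum.exists_nnnorm_eq_spectralRadius (↑u⁻¹ : A)
  rw [IsStarNormal.spectralRadius_eq_nnnorm, ENNReal.coe_inj] at hμ_norm
  rw [← spectrum.map_inv, Set.mem_inv, IsUnit.unit_spec, ← spectrum.singleton_sub_eq] at hμ
  obtain ⟨_, hz', w, hw, hzw⟩ := Set.mem_sub.mp hμ
  rw [Set.mem_singleton_iff.mp hz'] at hzw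
  calc Metric.infDist z (spectrum ℂ a) ≤ dist z w := Metric.infDist_le_dist_of_mem hw
    _ = ‖μ‖⁻¹ := by rw [dist_eq_norm, hzw, norm_inv]
    _ = ‖resolvent a z‖⁻¹ := by rw [spectrum.resolvent_eq hres, ← coe_nnnorm, hμ_norm, coe_nnnorm]

theorem stmt14_general {𝓗 : Type*} [NormedAddCommGroup 𝓗] [InnerProductSpace ℂ 𝓗]
    [CompleteSpace 𝓗]
    (H Θ : 𝓗 →L[ℂ] 𝓗) (hΘsa : IsSelfAdjoint Θ)
    (c : ℝ) (hc : 0 < c) (hpos : ∀ x : 𝓗, c * ‖x‖ ^ 2 ≤ (⟪Θ x, x⟫_ℂ).re)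
    (hΘinv : IsUnit Θ)
    (hquasi : ContinuousLinearMap.adjoint H * Θ = Θ * H)
    (z : ℂ) :
    Metric.infDist z (spectrum ℂ H) ≤
      Real.sqrt (‖Θ‖ * ‖Ring.inverse Θ‖) * ‖Ring.inverse (H - z • 1)‖⁻¹ := by
  have hΘ : 0 ≤ Θ := Θ.nonneg_iff_isPositive.mpr <| ContinuousLinearMap.isPositive_def'.mpr
    ⟨hΘsa, fun x => (by positivity : 0 ≤ c * ‖x‖ ^ 2).trans (hpos x)⟩
  obtain ⟨s, hs⟩ : IsUnit (CFC.sqrt Θ) := (CFC.isUnit_sqrt_iff Θ).mpr hΘinv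
  have hs_sa : IsSelfAdjoint (s : 𝓗 →L[ℂ] 𝓗) := hs ▸ (CFC.sqrt_nonneg Θ).isSelfAdjoint
  have hss : (s * s : 𝓗 →L[ℂ] 𝓗) = Θ := hs ▸ CFC.sqrt_mul_sqrt_self Θ
  have hA : IsSelfAdjoint (s * H * ↑s⁻¹) :=
    hs_sa.units_conj_of_star_mul_eq (by rwa [hss, ContinuousLinearMap.star_eq_adjoint])
  have := hA.isStarNormal
  calc Metric.infDist z (spectrum ℂ H) = Metric.infDist z (spectrum ℂ (s * H * ↑s⁻¹)) := by
        rw [spectrum.units_conjugate]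
    _ ≤ ‖resolvent (s * H * ↑s⁻¹) z‖⁻¹ := IsStarNormal.infDist_spectrum_le _ z
    _ ≤ ‖(s : 𝓗 →L[ℂ] 𝓗)‖ * ‖(↑s⁻¹ : 𝓗 →L[ℂ] 𝓗)‖ * ‖resolvent H z‖⁻¹ := by
        rw [resolvent_units_conj]; exact s.inv_norm_conj_le _
    _ = _ := by
        rw [← hss, hs_sa.sqrt_norm_mul_self_mul_norm_inverse, resolvent, ← neg_sub,
          Ring.inverse_neg, norm_neg, Algebra.algebraMap_eq_smul_one]

/-- Quasi-Hermitian operators have trivial pseudospectrum: if `Θ` is bounded,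
self-adjoint, positive and invertible (`⟨Θx, x⟩ ≥ c‖x‖²` for some `c > 0`) with
`H*Θ = ΘH`, then for every `z ∉ Sp(H)`,
`dist(z, Sp(H)) ≤ √(‖Θ‖·‖Θ⁻¹‖) · ‖(H - zI)⁻¹‖⁻¹`. -/
theorem stmt14 {𝓗 : Type*} [NormedAddCommGroup 𝓗] [InnerProductSpace ℂ 𝓗]
    [CompleteSpace 𝓗]
    (H Θ : 𝓗 →L[ℂ] 𝓗) (hΘsa : IsSelfAdjoint Θ)
    (c : ℝ) (hc : 0 < c) (hpos : ∀ x : 𝓗, c * ‖x‖ ^ 2 ≤ (⟪Θ x, x⟫_ℂ).re)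
    (hΘinv : IsUnit Θ)
    (hquasi : ContinuousLinearMap.adjoint H * Θ = Θ * H)
    (z : ℂ) (hz : z ∉ spectrum ℂ H) :
    Metric.infDist z (spectrum ℂ H) ≤
      Real.sqrt (‖Θ‖ * ‖Ring.inverse Θ‖) * ‖Ring.inverse (H - z • 1)‖⁻¹ :=
  stmt14_general H Θ hΘsa c hc hpos hΘinv hquasi z
end

section
/- Let 𝓗 be a complex Hilbert space, H a bounded linear operator on 𝓗, and λ ∈ ℂ. Let E and F be closed subspaces of 𝓗 such that every φ ∈ E satisfies (H − λI)φ = 0, F is H-invariant, 𝓗 = E ⊕ F is a (not necessarily orthogonal) direct sum with bounded associated projections, and δ₀ := inf{‖(H − λI) y‖ : y ∈ F, ‖y‖ = 1} > 0. Let (z_N) be a sequence in ℂ with z_N → λ and (f_N) a sequence of unit vectors with ‖(H − z_N I) f_N‖ → 0. Write f_N = a_N + b_N with a_N ∈ E and b_N ∈ F. Then ‖b_N‖ → 0 as N → ∞. -/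
/-!
Write `r_N = (H - z_N) f_N`. Since `H = λ` on `E`, `r_N = (λ - z_N) a_N + (H - z_N) b_N` with the
first term in `E` and the second in the invariant subspace `F`, so the bounded projection onto `E`
along `F` gives `‖(H - z_N) b_N‖ ≤ (1 + ‖P‖) ‖r_N‖`. On `F`, `H - λ` is bounded below by `δ₀`, hence
`H - z_N` by `δ₀ - |z_N - λ| ≥ δ₀ / 2` for large `N`, and `‖b_N‖ ≤ 2 (1 + ‖P‖) ‖r_N‖ / δ₀ → 0`.
-/

open Filter Topology

section BoundedBelow

variable {𝕜 V : Type*} [NormedField 𝕜] [SeminormedAddCommGroup V] [NormedSpace 𝕜 V]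

theorem sub_norm_sub_mul_norm_le {x y : V} {lam z : 𝕜} {δ : ℝ}
    (h : δ * ‖y‖ ≤ ‖x - lam • y‖) : (δ - ‖z - lam‖) * ‖y‖ ≤ ‖x - z • y‖ := by
  have hsplit : x - lam • y = (x - z • y) + (z - lam) • y := by rw [sub_smul]; abel
  have : ‖x - lam • y‖ ≤ ‖x - z • y‖ + ‖z - lam‖ * ‖y‖ := by
    rw [hsplit, ← norm_smul]; exact norm_add_le _ _
  linarith

end BoundedBelow

section Projection

variable {𝕜 V : Type*} [NontriviallyNormedField 𝕜] [SeminormedAddCommGroup V] [NormedSpace 𝕜 V]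

theorem norm_le_one_add_opNorm_mul_norm_add (P : V →L[𝕜] V) {a b : V} (ha : P a = a)
    (hb : P b = 0) : ‖b‖ ≤ (1 + ‖P‖) * ‖a + b‖ := by
  have hb_eq : b = (a + b) - P (a + b) := by rw [map_add, ha, hb]; abel
  calc ‖b‖ = ‖(a + b) - P (a + b)‖ := congrArg _ hb_eq
    _ ≤ ‖a + b‖ + ‖P (a + b)‖ := norm_sub_le _ _
    _ ≤ ‖a + b‖ + ‖P‖ * ‖a + b‖ := by gcongr; exact P.le_opNorm _
    _ = (1 + ‖P‖) * ‖a + b‖ := by ring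

variable {H P : V →L[𝕜] V} {E F : Submodule 𝕜 V} {lam : 𝕜}

theorem norm_sub_smul_le_of_mem_invariant (hE : ∀ φ ∈ E, H φ = lam • φ)
    (hFinv : ∀ y ∈ F, H y ∈ F) (hPidE : ∀ x ∈ E, P x = x) (hPzeroF : ∀ x ∈ F, P x = 0)
    {a b : V} (ha : a ∈ E) (hb : b ∈ F) (z : 𝕜) :
    ‖H b - z • b‖ ≤ (1 + ‖P‖) * ‖H (a + b) - z • (a + b)‖ := by
  have hres : H (a + b) - z • (a + b) = (lam - z) • a + (H b - z • b) := by
    rw [map_add, hE a ha, sub_smul, smul_add]; abel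
  rw [hres]
  exact norm_le_one_add_opNorm_mul_norm_add P (hPidE _ (E.smul_mem _ ha))
    (hPzeroF _ (F.sub_mem (hFinv b hb) (F.smul_mem z hb)))

end Projection

theorem stmt16_general {𝓗 : Type*} [NormedAddCommGroup 𝓗] [InnerProductSpace ℂ 𝓗]
    (H : 𝓗 →L[ℂ] 𝓗) (lam : ℂ) (E F : Submodule ℂ 𝓗)
    (hE : ∀ φ ∈ E, H φ = lam • φ)
    (hFinv : ∀ y ∈ F, H y ∈ F)
    (P : 𝓗 →L[ℂ] 𝓗)
    (hPidE : ∀ x ∈ E, P x = x) (hPzeroF : ∀ x ∈ F, P x = 0)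
    (δ₀ : ℝ) (hδ₀ : 0 < δ₀) (hlow : ∀ y ∈ F, δ₀ * ‖y‖ ≤ ‖H y - lam • y‖)
    (z : ℕ → ℂ) (hz : Filter.Tendsto z Filter.atTop (nhds lam))
    (f : ℕ → 𝓗)
    (hres : Filter.Tendsto (fun N => ‖H (f N) - z N • f N‖) Filter.atTop (nhds 0))
    (aa bb : ℕ → 𝓗) (haE : ∀ N, aa N ∈ E) (hbF : ∀ N, bb N ∈ F)
    (hsum : ∀ N, f N = aa N + bb N) :
    Filter.Tendsto (fun N => ‖bb N‖) Filter.atTop (nhds 0) := by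
  set C := 2 * (1 + ‖P‖) / δ₀
  have hz_close : ∀ᶠ N in atTop, ‖z N - lam‖ ≤ δ₀ / 2 := by
    have : Tendsto (fun N => ‖z N - lam‖) atTop (𝓝 0) := tendsto_iff_norm_sub_tendsto_zero.mp hz
    exact this.eventually_le_const (half_pos hδ₀)
  have hbound : ∀ᶠ N in atTop, ‖bb N‖ ≤ C * ‖H (f N) - z N • f N‖ := by
    filter_upwards [hz_close] with N hN
    have hbelow := sub_norm_sub_mul_norm_le (z := z N) (hlow _ (hbF N))
    have hproj := norm_sub_smul_le_of_mem_invariant hE hFinv hPidE hPzeroF (haE N) (hbF N) (z N)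
    rw [← hsum N] at hproj
    have : δ₀ / 2 * ‖bb N‖ ≤ (1 + ‖P‖) * ‖H (f N) - z N • f N‖ := by
      nlinarith [norm_nonneg (bb N)]
    rw [div_mul_eq_mul_div, le_div_iff₀ hδ₀]
    linarith
  have hlim : Tendsto (fun N => C * ‖H (f N) - z N • f N‖) atTop (𝓝 0) := by
    simpa using hres.const_mul C
  exact squeeze_zero' (.of_forall fun N => norm_nonneg _) hbound hlim

/-- Eigenfunction convergence: suppose `𝓗 = E ⊕ F` with bounded associated projections,
where every `φ ∈ E` is an eigenvector of `H` for `λ`, `F` is closed and `H`-invariant,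
and `H - λI` is bounded below on `F` (i.e. `inf{‖(H - λI) y‖ : y ∈ F, ‖y‖ = 1} > 0`).
If `z_N → λ` and `(f_N)` are unit vectors with `‖(H - z_N I) f_N‖ → 0`, writing
`f_N = a_N + b_N` with `a_N ∈ E`, `b_N ∈ F`, then `‖b_N‖ → 0`. -/
theorem stmt16 {𝓗 : Type*} [NormedAddCommGroup 𝓗] [InnerProductSpace ℂ 𝓗]
    [CompleteSpace 𝓗]
    (H : 𝓗 →L[ℂ] 𝓗) (lam : ℂ) (E F : Submodule ℂ 𝓗)
    (hEclosed : IsClosed (E : Set 𝓗)) (hFclosed : IsClosed (F : Set 𝓗))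
    (hE : ∀ φ ∈ E, H φ = lam • φ)
    (hFinv : ∀ y ∈ F, H y ∈ F)
    (P : 𝓗 →L[ℂ] 𝓗)
    (hPE : ∀ x : 𝓗, P x ∈ E) (hPF : ∀ x : 𝓗, x - P x ∈ F)
    (hPidE : ∀ x ∈ E, P x = x) (hPzeroF : ∀ x ∈ F, P x = 0)
    (δ₀ : ℝ) (hδ₀ : 0 < δ₀) (hlow : ∀ y ∈ F, δ₀ * ‖y‖ ≤ ‖H y - lam • y‖)
    (z : ℕ → ℂ) (hz : Filter.Tendsto z Filter.atTop (nhds lam))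
    (f : ℕ → 𝓗) (hf : ∀ N, ‖f N‖ = 1)
    (hres : Filter.Tendsto (fun N => ‖H (f N) - z N • f N‖) Filter.atTop (nhds 0))
    (aa bb : ℕ → 𝓗) (haE : ∀ N, aa N ∈ E) (hbF : ∀ N, bb N ∈ F)
    (hsum : ∀ N, f N = aa N + bb N) :
    Filter.Tendsto (fun N => ‖bb N‖) Filter.atTop (nhds 0) :=
  stmt16_general H lam E F hE hFinv P hPidE hPzeroF δ₀ hδ₀ hlow z hz f hres aa bb haE hbF hsum
end
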